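/- arXiv:math/9911250 — 3 statements merged into one kernel-verified Lean document; each statement's English description precedes it below -/
import Mathlib

section
/- A finite group of odd order all of whose Sylow subgroups are cyclic is metacyclic, i.e., it is an extension of a cyclic group by a cyclic group. -/
theorem odd_order_cyclic_sylow_metacyclic_general (G : Type) [Group G] [Finite G]
    (hsyl : ∀ (p : ℕ) (_ : Fact p.Prime) (P : Sylow p G), IsCyclic P) :
    ∃ (N : Subgroup G) (hN : N.Normal), IsCyclic N ∧
      (letI := hN; IsCyclic (G ⧸ N)) := by
  have : IsZGroup G := ⟨fun p hp => hsyl p ⟨hp⟩⟩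
  exact ⟨commutator G, inferInstance, IsZGroup.isCyclic_commutator G,
    IsZGroup.isCyclic_abelianization⟩

/-- A finite group of odd order all of whose Sylow subgroups are cyclic is metacyclic:
it has a cyclic normal subgroup with cyclic quotient. -/
theorem odd_order_cyclic_sylow_metacyclic (G : Type) [Group G] [Finite G]
    (hodd : Odd (Nat.card G))
    (hsyl : ∀ (p : ℕ) (_ : Fact p.Prime) (P : Sylow p G), IsCyclic P) :
    ∃ (N : Subgroup G) (hN : N.Normal), IsCyclic N ∧
      (letI := hN; IsCyclic (G ⧸ N)) :=
  odd_order_cyclic_sylow_metacyclic_general G hsyl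
end

section
/- A finite 2-group with a unique element of order 2 is either cyclic or generalized quaternion. -/
/-!
Let `A` be maximal among the abelian normal subgroups of the `2`-group `G`. Then `A` is its own
centralizer: otherwise a central element of `G ⧸ A` lying in the image of the centralizer of `A`
would generate, together with `A`, a larger abelian normal subgroup. An abelian `p`-group with at
most one element of order `p` is cyclic, so `A = ⟨a⟩` with `a` of order `2 ^ n`, and `n ≥ 2`
unless `G = A`, because an element of order `2` is central.

Let `b ∉ A` with `b ^ 2 ∈ A`, say `b a b⁻¹ = a ^ s` and `b ^ 2 = a ^ e`. Since
`(b a ^ m) ^ 2 = a ^ ((s + 1) m + e)` and no element outside `A` is an involution, the congruence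
`(s + 1) m + e ≡ 0 (mod 2 ^ n)` has no solution; together with `s ^ 2 ≡ 1` and `s e ≡ e` this
forces `s ≡ -1`, and then `b ^ 2` is the involution `a ^ 2 ^ (n - 1)`. As `-1` is not a square
modulo `4`, every element of `G ⧸ A` has order at most `2`; all of them act on `A` by inversion,
so `G ⧸ A = {1, b A}` and `G = ⟨a, b⟩` is generalized quaternion.
-/

open Subgroup

theorem Int.two_pow_dvd_add_one_of_forall_not_dvd {n : ℕ} {s e : ℤ} (hs : 2 ^ n ∣ s ^ 2 - 1)
    (hs1 : ¬ 2 ^ n ∣ s - 1) (he : 2 ^ n ∣ e * (s - 1))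
    (hm : ∀ m, ¬ 2 ^ n ∣ (s + 1) * m + e) : 2 ^ n ∣ s + 1 := by
  obtain _ | k := n
  · simp at hs1
  have hcop (w : ℤ) (hw : Odd w) : IsCoprime ((2 : ℤ) ^ k) w :=
    (Int.isCoprime_two_left.mpr hw).pow_left
  have h2k : (2 : ℤ) ^ k ≠ 0 := by positivity
  rw [pow_succ] at hs hs1 he hm ⊢
  obtain ⟨r, rfl⟩ : Odd s := by
    have : Even (s ^ 2 - 1) := even_iff_two_dvd.mpr (dvd_of_mul_left_dvd hs)
    simpa [Int.even_sub, parity_simps] using this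
  have hs' : 2 ^ k ∣ 2 * r * (r + 1) := by
    rw [show (2 * r + 1) ^ 2 - 1 = 2 * r * (r + 1) * 2 by ring] at hs
    exact (mul_dvd_mul_iff_right two_ne_zero).mp hs
  rcases Int.even_or_odd' r with ⟨t, rfl | rfl⟩
  · -- `s ≡ 1 [ZMOD 4]`: then `2 ^ k ∥ s - 1`, `e` is even, and some `m` solves the congruence
    exfalso
    obtain ⟨w, hw⟩ : 2 ^ k ∣ 2 * (2 * t) :=
      (hcop _ (odd_two_mul_add_one t)).dvd_of_dvd_mul_right hs'
    have hw2 : ¬ 2 ∣ w := fun ⟨c, hc⟩ ↦ hs1 ⟨c, by linear_combination hw + 2 ^ k * hc⟩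
    obtain ⟨f, rfl⟩ : 2 ∣ e := by
      rw [add_sub_cancel_right, hw, mul_left_comm] at he
      exact (Int.prime_two.dvd_mul.mp ((mul_dvd_mul_iff_left h2k).mp he)).resolve_right hw2
    obtain ⟨x, y, hxy⟩ := hcop (2 * t + 1) (odd_two_mul_add_one t)
    exact hm (-f * y) ⟨f * x, by linear_combination (-2 * f) * hxy⟩
  · -- `s ≡ 3 [ZMOD 4]`: then `2 ^ k ∣ s + 1` and `2 ^ k ∣ e`
    rw [mul_comm 2 (2 * t + 1), mul_assoc] at hs'
    obtain ⟨d, hd⟩ := (hcop _ (odd_two_mul_add_one t)).dvd_of_dvd_mul_left hs'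
    obtain ⟨f, rfl⟩ : 2 ^ k ∣ e := by
      rw [show 2 * (2 * t + 1) + 1 - 1 = (2 * t + 1) * 2 by ring, ← mul_assoc] at he
      exact (hcop _ (odd_two_mul_add_one t)).dvd_of_dvd_mul_right
        ((mul_dvd_mul_iff_right two_ne_zero).mp he)
    have hf : Odd f := by
      rw [← Int.not_even_iff_odd, even_iff_two_dvd]
      rintro ⟨c, rfl⟩
      exact hm 0 ⟨c, by ring⟩
    obtain ⟨g, rfl⟩ := hf
    rcases Int.even_or_odd' d with ⟨c, rfl | rfl⟩
    · exact ⟨c, by linear_combination hd⟩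
    · exact (hm 1 ⟨c + g + 1, by linear_combination hd⟩).elim

theorem IsPGroup.isCyclic_of_subsingleton_orderOf_eq {p : ℕ} [hp : Fact p.Prime] {G : Type*}
    [CommGroup G] [Finite G] (hG : IsPGroup p G) (h : {g : G | orderOf g = p}.Subsingleton) :
    IsCyclic G := by
  obtain ⟨g, hg⟩ := Monoid.exists_orderOf_eq_exponent (Monoid.ExponentExists.of_finite (G := G))
  refine isCyclic_iff_exists_zpowers_eq_top.mpr ⟨g, ?_⟩
  by_contra hne
  have : Nontrivial (G ⧸ zpowers g) := QuotientGroup.nontrivial_iff.mpr hne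
  obtain ⟨k, hk, hcard⟩ := (hG.to_quotient _).nontrivial_iff_card.mp this
  obtain ⟨q, hq⟩ := exists_prime_orderOf_dvd_card' (G := G ⧸ zpowers g) p
    (hcard ▸ dvd_pow_self p hk.ne')
  obtain ⟨x, rfl⟩ := QuotientGroup.mk_surjective q
  have hx : x ∉ zpowers g := fun hx ↦ hp.out.ne_one <| by
    rwa [(QuotientGroup.eq_one_iff x).mpr hx, orderOf_one, eq_comm] at hq
  obtain ⟨e, he⟩ : ∃ e : ℤ, g ^ e = x ^ p := mem_zpowers_iff.mp <|
    (QuotientGroup.eq_one_iff _).mp <| by rw [QuotientGroup.mk_pow, ← hq, pow_orderOf_eq_one]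
  obtain ⟨_ | M, hM⟩ := (IsPGroup.iff_orderOf.mp hG) g
  · refine hx ?_
    rw [← pow_one x, ← pow_zero p, ← hM, hg, Monoid.pow_exponent_eq_one]
    exact one_mem _
  have hpM : p ^ M ≠ 0 := pow_ne_zero _ hp.out.ne_zero
  -- `p ∣ e`, since `g ^ (e * p ^ M) = x ^ exponent G = 1`
  obtain ⟨l, rfl⟩ : (p : ℤ) ∣ e := by
    have : g ^ (e * p ^ M) = 1 := by
      rw [zpow_mul, he, ← Nat.cast_pow, zpow_natCast, ← pow_mul, ← pow_succ', ← hM, hg,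
        Monoid.pow_exponent_eq_one]
    rw [← orderOf_dvd_iff_zpow_eq_one, hM, pow_succ'] at this
    push_cast at this
    exact (mul_dvd_mul_iff_right (by exact_mod_cast hpM : (p : ℤ) ^ M ≠ 0)).mp this
  -- both have order `p`, but only the second lies in `⟨g⟩`
  have hy : x * g ^ (-l) = g ^ p ^ M := by
    refine h (orderOf_eq_prime ?_ fun h1 ↦ hx ?_) ?_
    · rw [mul_pow, ← he, ← zpow_natCast, ← zpow_mul, ← zpow_add]; simp [mul_comm]
    · rw [← mul_inv_cancel_right x (g ^ (-l)), h1, one_mul]; exact inv_mem (zpow_mem_zpowers g _)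
    · rw [Set.mem_ofPred_eq, orderOf_pow_of_dvd hpM (by rw [hM]; exact pow_dvd_pow _ (by omega)),
        hM, pow_succ, Nat.mul_div_cancel_left _ (Nat.pos_of_ne_zero hpM)]
  refine hx ?_
  rw [← mul_inv_cancel_right x (g ^ (-l)), hy]
  exact mul_mem (npow_mem_zpowers _ _) (inv_mem (zpow_mem_zpowers g _))

theorem IsPGroup.sq_eq_one_of_forall_orderOf_ne_four {Q : Type*} [Group Q] (hQ : IsPGroup 2 Q)
    (h4 : ∀ q : Q, orderOf q ≠ 4) (q : Q) : q ^ 2 = 1 := by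
  obtain ⟨j, hj⟩ := IsPGroup.iff_orderOf.mp hQ q
  rw [← orderOf_dvd_iff_pow_eq_one, hj]
  by_contra hdvd
  have hj2 : 2 ≤ j := by
    by_contra! h
    interval_cases j <;> simp at hdvd
  refine h4 (q ^ 2 ^ (j - 2)) ?_
  rw [orderOf_pow_of_dvd (by positivity) (by rw [hj]; exact pow_dvd_pow 2 (by omega)), hj,
    Nat.pow_div (by omega) (by norm_num), Nat.sub_sub_self hj2]

section

variable {G : Type*} [Group G]

theorem IsPGroup.exists_mem_center_of_normal {p : ℕ} [Fact p.Prime] [Finite G]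
    (hG : IsPGroup p G) {N : Subgroup G} [N.Normal] (hN : N ≠ ⊥) :
    ∃ x ∈ N, x ∈ center G ∧ x ≠ 1 := by
  have hp : p ∣ Nat.card N := by
    obtain ⟨k, hk, hcard⟩ := (hG.to_subgroup N).nontrivial_iff_card.mp
      ((nontrivial_iff_ne_bot N).mpr hN)
    exact hcard ▸ dvd_pow_self p hk.ne'
  have h1 : (1 : N) ∈ MulAction.fixedPoints (ConjAct G) N := fun g ↦ by
    ext; simp
  obtain ⟨x, hx, hx1⟩ :=
    (hG.of_equiv ConjAct.toConjAct).exists_fixed_point_of_prime_dvd_card_of_fixed_point N hp h1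
  refine ⟨x, x.2, mem_center_iff.mpr fun g ↦ ?_, fun h ↦ hx1 (Subtype.ext h.symm)⟩
  have := congrArg Subtype.val (hx (ConjAct.toConjAct g))
  rw [ConjAct.Subgroup.val_conj_smul, ConjAct.toConjAct_smul] at this
  exact mul_inv_eq_iff_eq_mul.mp this

theorem IsPGroup.exists_normal_centralizer_eq_self {p : ℕ} [Fact p.Prime] [Finite G]
    (hG : IsPGroup p G) : ∃ A : Subgroup G, A.Normal ∧ centralizer A = A := by
  obtain ⟨A, ⟨hAn, hAc⟩, hmax⟩ :=
    Set.Finite.exists_maximalFor id {A : Subgroup G | A.Normal ∧ A ≤ centralizer A}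
      (Set.toFinite _) ⟨⊥, inferInstance, bot_le⟩
  refine ⟨A, hAn, le_antisymm (fun x hx ↦ ?_) hAc⟩
  have := hAn
  by_contra hxA
  have hN : (centralizer A).map (QuotientGroup.mk' A) ≠ ⊥ := fun h ↦ hxA <|
    (QuotientGroup.eq_one_iff x).mp ((mem_bot.mp (h ▸ mem_map_of_mem _ hx)))
  have : ((centralizer A).map (QuotientGroup.mk' A)).Normal :=
    Normal.map inferInstance _ (QuotientGroup.mk'_surjective A)
  obtain ⟨_, ⟨c, hc, rfl⟩, hcZ, hc1⟩ := (hG.to_quotient A).exists_mem_center_of_normal hN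
  have hZ : zpowers c ≤ centralizer A := zpowers_le.mpr hc
  have hBn : (A ⊔ zpowers c).Normal := by
    rw [← QuotientGroup.ker_mk' A, sup_comm, ← comap_map_eq, MonoidHom.map_zpowers]
    refine Normal.comap ⟨fun y hy g ↦ ?_⟩ _
    rw [mem_center_iff.mp (zpowers_le.mpr hcZ hy) g, mul_inv_cancel_right]
    exact hy
  have hBc : A ⊔ zpowers c ≤ centralizer (A ⊔ zpowers c : Subgroup G) :=
    sup_le (le_centralizer_iff.mp (sup_le hAc hZ))
      (le_centralizer_iff.mp (sup_le (le_centralizer_iff.mp hZ) (le_centralizer _)))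
  exact hc1 <| (QuotientGroup.eq_one_iff c).mpr <|
    hmax ⟨hBn, hBc⟩ le_sup_left (mem_sup_right (mem_zpowers c))

end

section

variable {G : Type*} [Group G] {a b : G} {n : ℕ}

theorem mem_center_of_sq_eq_one (hG : {g : G | orderOf g = 2}.Subsingleton) (ha : a ^ 2 = 1) :
    a ∈ center G := by
  refine mem_center_iff.mpr fun g ↦ ?_
  by_cases ha1 : a = 1
  · rw [ha1, one_mul, mul_one]
  have : g * a * g⁻¹ = a := hG
    (orderOf_eq_prime (by rw [conj_pow, ha, mul_one, mul_inv_cancel]) (by simpa using ha1))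
    (orderOf_eq_prime ha ha1)
  rw [← mul_inv_eq_iff_eq_mul, this]

theorem conj_sq_ne_inv {g : G} (h4 : 4 ∣ orderOf a) (hg : g * a * g⁻¹ ∈ zpowers a) :
    g ^ 2 * a * (g ^ 2)⁻¹ ≠ a⁻¹ := by
  obtain ⟨t, ht⟩ := mem_zpowers_iff.mp hg
  intro h
  have : a ^ (t * t + 1) = 1 := by
    have : g ^ 2 * a * (g ^ 2)⁻¹ = a ^ (t * t) := by
      rw [zpow_mul, ht, conj_zpow, ht, sq]; group
    rw [zpow_add_one, ← this, h, inv_mul_cancel]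
  have h4' : (4 : ℤ) ∣ t * t + 1 :=
    (Int.natCast_dvd_natCast.mpr h4).trans (orderOf_dvd_iff_zpow_eq_one.mpr this)
  have := (ZMod.intCast_zmod_eq_zero_iff_dvd _ 4).mpr h4'
  push_cast at this
  generalize (t : ZMod 4) = u at this
  revert u; decide

theorem conj_eq_inv_of_sq_mem (hG : {g : G | orderOf g = 2}.Subsingleton) (ha : orderOf a = 2 ^ n)
    [(zpowers a).Normal] (hcent : centralizer {a} ≤ zpowers a) (hb : b ∉ zpowers a)
    (hb2 : b ^ 2 ∈ zpowers a) : b * a * b⁻¹ = a⁻¹ := by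
  obtain ⟨s, hs⟩ := mem_zpowers_iff.mp (Normal.conj_mem inferInstance a (mem_zpowers a) b)
  obtain ⟨e, he⟩ := mem_zpowers_iff.mp hb2
  have hconj (k : ℤ) : b * a ^ k * b⁻¹ = a ^ (s * k) := by
    rw [← conj_zpow, ← hs, ← zpow_mul]
  have hdvd {k l : ℤ} : a ^ k = a ^ l ↔ 2 ^ n ∣ k - l := by
    rw [← mul_inv_eq_one, ← zpow_sub, ← orderOf_dvd_iff_zpow_eq_one, ha]; push_cast; rfl
  have hb_mem {x : G} (hx : x * a = a * x) : b⁻¹ * x ∉ zpowers a := fun hbx ↦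
    hb <| by simpa using mul_mem (hcent (mem_centralizer_singleton_iff.mpr hx)) (inv_mem hbx)
  suffices 2 ^ n ∣ s + 1 by rw [← hs, ← zpow_neg_one, hdvd]; simpa using this
  refine Int.two_pow_dvd_add_one_of_forall_not_dvd (e := e) ?_ ?_ ?_ ?_
  · -- `b ^ 2 ∈ ⟨a⟩` commutes with `a`
    suffices a ^ (s ^ 2) = a ^ (1 : ℤ) from hdvd.mp this
    rw [sq, ← hconj, hs, zpow_one]
    calc b * (b * a * b⁻¹) * b⁻¹ = (b * b) * a * (b * b)⁻¹ := by group
      _ = a := by rw [← sq, ← he]; group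
  · -- otherwise `b` commutes with `a`
    intro h
    refine hb_mem (x := b) (mul_inv_eq_iff_eq_mul.mp ?_) (by simp)
    rw [← hs, hdvd.mpr (by simpa using h), zpow_one]
  · -- `b` commutes with `b ^ 2`
    suffices a ^ (s * e) = a ^ e by simpa [mul_sub, mul_comm] using hdvd.mp this
    rw [← hconj, he]; group
  · -- otherwise `b * a ^ m` would be an involution, hence central
    intro m hm
    have hsq : (b * a ^ m) ^ 2 = 1 := by
      calc (b * a ^ m) ^ 2 = (b * a ^ m * b⁻¹) * (b * b) * a ^ m := by rw [sq]; group
        _ = a ^ ((s + 1) * m + e) := by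
          rw [hconj, ← sq, ← he, ← zpow_add, ← zpow_add]; ring_nf
        _ = a ^ (0 : ℤ) := hdvd.mpr (by simpa using hm)
        _ = 1 := zpow_zero a
    refine hb_mem (x := b * a ^ m) ?_ (by simp)
    exact (mem_center_iff.mp (mem_center_of_sq_eq_one hG hsq) a).symm

theorem sq_eq_pow_of_sq_mem (hG : {g : G | orderOf g = 2}.Subsingleton)
    (ha : orderOf a = 2 ^ (n + 1)) [(zpowers a).Normal] (hcent : centralizer {a} ≤ zpowers a)
    (hb : b ∉ zpowers a) (hb2 : b ^ 2 ∈ zpowers a) : b ^ 2 = a ^ 2 ^ n := by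
  have hba := conj_eq_inv_of_sq_mem hG ha hcent hb hb2
  obtain ⟨e, he⟩ := mem_zpowers_iff.mp hb2
  refine hG (orderOf_eq_prime ?_ fun h ↦ hb (hcent ?_)) ?_
  · -- `b` inverts `b ^ 2 ∈ ⟨a⟩`, but also commutes with it
    have : b * b ^ 2 * b⁻¹ = (b ^ 2)⁻¹ := by rw [← he, ← conj_zpow, hba, inv_zpow]
    calc (b ^ 2) ^ 2 = (b * b ^ 2 * b⁻¹) * b ^ 2 := by group
      _ = 1 := by rw [this, inv_mul_cancel]
  · exact mem_centralizer_singleton_iff.mpr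
      (mem_center_iff.mp (mem_center_of_sq_eq_one hG h) a).symm
  · rw [Set.mem_ofPred_eq, orderOf_pow_of_dvd (by positivity)
      (by rw [ha, pow_succ]; exact dvd_mul_right _ _), ha, pow_succ,
      Nat.mul_div_cancel_left _ (by positivity)]

theorem sq_mem_zpowers (hG : {g : G | orderOf g = 2}.Subsingleton) (h2 : IsPGroup 2 G)
    (ha : orderOf a = 2 ^ n) (hn : 2 ≤ n) [(zpowers a).Normal]
    (hcent : centralizer {a} ≤ zpowers a) (g : G) : g ^ 2 ∈ zpowers a := by
  rw [← QuotientGroup.eq_one_iff, QuotientGroup.mk_pow]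
  refine (h2.to_quotient _).sq_eq_one_of_forall_orderOf_ne_four (fun q hq ↦ ?_) _
  obtain ⟨g, rfl⟩ := QuotientGroup.mk_surjective q
  -- `g ^ 2` would invert `a`, which a square cannot do
  have hg2 : g ^ 2 ∉ zpowers a := by
    rw [← QuotientGroup.eq_one_iff, QuotientGroup.mk_pow, ← orderOf_dvd_iff_pow_eq_one, hq]
    decide
  have hg4 : (g ^ 2) ^ 2 ∈ zpowers a := by
    rw [← QuotientGroup.eq_one_iff, QuotientGroup.mk_pow, QuotientGroup.mk_pow, ← pow_mul,
      ← orderOf_dvd_iff_pow_eq_one, hq]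
  exact conj_sq_ne_inv (ha ▸ pow_dvd_pow 2 hn) (Normal.conj_mem inferInstance a (mem_zpowers a) g)
    (conj_eq_inv_of_sq_mem hG ha hcent hg2 hg4)

theorem mem_zpowers_or_inv_mul_mem (hG : {g : G | orderOf g = 2}.Subsingleton)
    (h2 : IsPGroup 2 G) (ha : orderOf a = 2 ^ n) (hn : 2 ≤ n) [(zpowers a).Normal]
    (hcent : centralizer {a} ≤ zpowers a) (hb : b ∉ zpowers a) (g : G) :
    g ∈ zpowers a ∨ b⁻¹ * g ∈ zpowers a := by
  refine or_iff_not_imp_left.mpr fun hg ↦ hcent (mem_centralizer_singleton_iff.mpr ?_)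
  have hga := conj_eq_inv_of_sq_mem hG ha hcent hg (sq_mem_zpowers hG h2 ha hn hcent g)
  have hba := conj_eq_inv_of_sq_mem hG ha hcent hb (sq_mem_zpowers hG h2 ha hn hcent b)
  calc b⁻¹ * g * a = b⁻¹ * (g * a * g⁻¹) * g := by group
    _ = b⁻¹ * (b * a * b⁻¹) * g := by rw [hga, hba]
    _ = a * (b⁻¹ * g) := by group

end

section

variable {G : Type*} [Group G] {a : G} {m : ℕ}

lemma pow_zmod_val_add [NeZero m] (ha : a ^ m = 1) (i j : ZMod m) :
    a ^ (i + j).val = a ^ i.val * a ^ j.val := by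
  rw [ZMod.val_add, ← pow_add]
  conv_rhs => rw [← Nat.mod_add_div (i.val + j.val) m, pow_add, pow_mul, ha, one_pow, mul_one]

lemma pow_zmod_val_natCast (ha : a ^ m = 1) (k : ℕ) :
    a ^ (k : ZMod m).val = a ^ k := by
  conv_rhs =>
    rw [← Nat.mod_add_div k m, pow_add, pow_mul, ha, one_pow, mul_one, ← ZMod.val_natCast]

end

namespace QuaternionGroup

variable {G : Type*} [Group G] {n : ℕ} [NeZero n] {a b : G}

def lift (ha : a ^ (2 * n) = 1) (hba : b * a * b⁻¹ = a⁻¹) (hb : b ^ 2 = a ^ n) :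
    QuaternionGroup n →* G where
  toFun
    | .a i => a ^ i.val
    | .xa i => b * a ^ i.val
  map_one' := by simp [← a_zero]
  map_mul' := by
    have hsub (i j : ZMod (2 * n)) : a ^ (j - i).val = (a ^ i.val)⁻¹ * a ^ j.val := by
      rw [eq_inv_mul_iff_mul_eq, ← pow_zmod_val_add ha, add_sub_cancel]
    have hcomm (k : ℕ) : a ^ k * b = b * (a ^ k)⁻¹ := by
      rw [← inv_pow]
      refine (SemiconjBy.pow_right ?_ k).symm
      calc b * a⁻¹ = (b * a * b⁻¹)⁻¹ * b := by group
        _ = a * b := by rw [hba, inv_inv]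
    rintro (i | i) (j | j)
    · exact pow_zmod_val_add ha i j
    · show b * a ^ (j - i).val = a ^ i.val * (b * a ^ j.val)
      rw [hsub, ← mul_assoc, ← mul_assoc, hcomm]
    · show b * a ^ (i + j).val = b * a ^ i.val * a ^ j.val
      rw [pow_zmod_val_add ha, mul_assoc]
    · show a ^ ((n : ZMod (2 * n)) + j - i).val = b * a ^ i.val * (b * a ^ j.val)
      rw [add_sub_assoc, pow_zmod_val_add ha, pow_zmod_val_natCast ha, hsub, ← hb, mul_assoc b,
        ← mul_assoc (a ^ i.val), hcomm]
      simp only [sq, mul_assoc]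

theorem lift_bijective (ha : orderOf a = 2 * n) (hba : b * a * b⁻¹ = a⁻¹) (hb : b ^ 2 = a ^ n)
    (hbA : b ∉ zpowers a) (hG : ∀ g : G, g ∈ zpowers a ∨ b⁻¹ * g ∈ zpowers a) :
    Function.Bijective (lift (ha ▸ pow_orderOf_eq_one a) hba hb) := by
  have hinj {i j : ZMod (2 * n)} (h : a ^ i.val = a ^ j.val) : i = j :=
    ZMod.val_injective _ <| pow_injOn_Iio_orderOf (by rw [Set.mem_Iio, ha]; exact ZMod.val_lt i)
      (by rw [Set.mem_Iio, ha]; exact ZMod.val_lt j) h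
  have ha' : a ^ (2 * n) = 1 := ha ▸ pow_orderOf_eq_one a
  have hfin : IsOfFinOrder a := orderOf_pos_iff.mp (by rw [ha]; exact Nat.pos_of_neZero _)
  constructor
  · rintro (i | i) (j | j) h
    · exact congrArg _ (hinj h)
    · refine (hbA ?_).elim
      rw [eq_mul_inv_of_mul_eq (h : a ^ i.val = b * a ^ j.val).symm]
      exact mul_mem (npow_mem_zpowers _ _) (inv_mem (npow_mem_zpowers _ _))
    · refine (hbA ?_).elim
      rw [eq_mul_inv_of_mul_eq (h : b * a ^ i.val = a ^ j.val)]
      exact mul_mem (npow_mem_zpowers _ _) (inv_mem (npow_mem_zpowers _ _))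
    · exact congrArg _ (hinj (mul_left_cancel (h : b * a ^ i.val = b * a ^ j.val)))
  · intro g
    rcases hG g with hg | hg
    · obtain ⟨k, rfl⟩ := hfin.mem_powers_iff_mem_zpowers.mpr hg
      exact ⟨.a k, pow_zmod_val_natCast ha' k⟩
    · obtain ⟨k, hk⟩ := hfin.mem_powers_iff_mem_zpowers.mpr hg
      refine ⟨.xa k, ?_⟩
      show b * a ^ (k : ZMod (2 * n)).val = g
      rw [pow_zmod_val_natCast ha', show a ^ k = b⁻¹ * g from hk, mul_inv_cancel_left]

end QuaternionGroup

/-- A finite 2-group with a unique element of order 2 is either cyclic or generalized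
quaternion (here `QuaternionGroup (2^m)`, `m ≥ 1`, is the generalized quaternion group
of order `2^{m+2} ≥ 8`). -/
theorem two_group_unique_involution_cyclic_or_quaternion (G : Type) [Group G] [Finite G]
    (h2 : IsPGroup 2 G) (hinv : ∃! g : G, orderOf g = 2) :
    IsCyclic G ∨ ∃ m : ℕ, 1 ≤ m ∧ Nonempty (G ≃* QuaternionGroup (2 ^ m)) := by
  have hG : {g : G | orderOf g = 2}.Subsingleton := fun x hx y hy ↦ hinv.unique hx hy
  obtain ⟨A, hAn, hAc⟩ := h2.exists_normal_centralizer_eq_self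
  obtain ⟨a, rfl⟩ : ∃ a, zpowers a = A := by
    have : IsMulCommutative A := le_centralizer_iff_isMulCommutative.mp hAc.ge
    refine A.isCyclic_iff_exists_zpowers_eq_top.mp ?_
    open scoped IsMulCommutative in
    exact (h2.to_subgroup A).isCyclic_of_subsingleton_orderOf_eq fun x hx y hy ↦
      Subtype.ext (hG ((orderOf_coe x).trans hx) ((orderOf_coe y).trans hy))
  have hcent : centralizer {a} ≤ zpowers a := by
    rw [← centralizer_closure, ← zpowers_eq_closure, hAc]
  by_cases htop : zpowers a = ⊤
  · exact Or.inl (isCyclic_iff_exists_zpowers_eq_top.mpr ⟨a, htop⟩)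
  obtain ⟨n, ha⟩ := IsPGroup.iff_orderOf.mp h2 a
  obtain ⟨m, rfl⟩ : ∃ m, n = m + 2 := by
    refine Nat.exists_eq_add_of_le' ?_
    by_contra! hn
    refine htop (eq_top_iff.mpr fun g _ ↦ hcent (mem_centralizer_singleton_iff.mpr ?_))
    refine mem_center_iff.mp (mem_center_of_sq_eq_one hG ?_) g
    rw [← orderOf_dvd_iff_pow_eq_one, ha]
    interval_cases n <;> norm_num
  obtain ⟨b, -, hb⟩ := SetLike.exists_of_lt (lt_top_iff_ne_top.mpr htop)
  have hb2 := sq_mem_zpowers hG h2 ha le_add_self hcent b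
  have hbij := QuaternionGroup.lift_bijective (by rw [ha, pow_succ' 2 (m + 1)])
    (conj_eq_inv_of_sq_mem hG ha hcent hb hb2) (sq_eq_pow_of_sq_mem hG ha hcent hb hb2) hb
    (mem_zpowers_or_inv_mul_mem hG h2 ha le_add_self hcent hb)
  exact Or.inr ⟨m + 1, le_add_self, ⟨(MulEquiv.ofBijective _ hbij).symm⟩⟩
end

section
/- SL_2(F_5) has maximal 2-hyperelementary subgroups isomorphic to the generalized quaternion groups Q_20, Q_12, and Q_8; in particular, SL_2(F_5) contains subgroups isomorphic to Q_8, Q_12, and Q_20. -/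
open Matrix QuaternionGroup

private abbrev SL5 := Matrix.SpecialLinearGroup (Fin 2) (ZMod 5)

private instance : DecidableEq SL5 := fun A B =>
  decidable_of_iff (A.1 = B.1) Subtype.ext_iff.symm

private def M (x y z w : ZMod 5) (h : x * w - y * z = 1 := by decide) : SL5 :=
  ⟨!![x, y; z, w], by simpa [Matrix.det_fin_two] using h⟩

/-- The candidate map `Q_{4n} → SL₂(𝔽₅)` sending `a i ↦ A ^ i` and `xa i ↦ X * A ^ i`. -/
private def qlift (n : ℕ) (A X : SL5) : QuaternionGroup n → SL5
  | .a i => A ^ i.val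
  | .xa i => X * A ^ i.val

private def qhom (n : ℕ) (A X : SL5)
    (hmul : ∀ g h : QuaternionGroup n, qlift n A X (g * h) = qlift n A X g * qlift n A X h)
    (hone : qlift n A X 1 = 1) : QuaternionGroup n →* SL5 :=
  { toFun := qlift n A X, map_one' := hone, map_mul' := hmul }

set_option maxHeartbeats 4000000 in
/-- `SL₂(𝔽₅)` contains subgroups isomorphic to the generalized quaternion groups
`Q₈`, `Q₁₂` and `Q₂₀` (its maximal 2-hyperelementary subgroups): there are injective
group homomorphisms from each of them into `SL₂(𝔽₅)`.  Here `QuaternionGroup m` is the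
generalized quaternion (dicyclic) group `Q_{4m}`. -/
theorem SL2_F5_contains_Q8_Q12_Q20 :
    (∃ f : QuaternionGroup 2 →* Matrix.SpecialLinearGroup (Fin 2) (ZMod 5),
      Function.Injective f) ∧
    (∃ f : QuaternionGroup 3 →* Matrix.SpecialLinearGroup (Fin 2) (ZMod 5),
      Function.Injective f) ∧
    (∃ f : QuaternionGroup 5 →* Matrix.SpecialLinearGroup (Fin 2) (ZMod 5),
      Function.Injective f) := by
  refine ⟨⟨qhom 2 (M 2 0 0 3) (M 0 4 1 0) (by decide) (by decide), ?_⟩,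
    ⟨qhom 3 (M 0 1 4 1) (M 0 2 2 0) (by decide) (by decide), ?_⟩,
    ⟨qhom 5 (M 0 1 4 3) (M 0 2 2 0) (by decide) (by decide), ?_⟩⟩
  · exact fun g h => by revert g h; decide
  · exact fun g h => by revert g h; decide
  · exact fun g h => by revert g h; decide
end
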